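/- Characterization of the potential via O_s: Let C be a CP-theory, ⟨T, I, E⟩ a weak execution model of C, and s a node of T. Then O_s has a ≤_p-greatest element, and for every terminal hypothetical derivation sequence ν₀,…,νₙ at s, the limit νₙ equals this greatest element of O_s. -/
import Mathlib


noncomputable section
open scoped Classical

namespace CP

/-- The three truth values. -/
inductive TV where
  | f | u | t
deriving DecidableEq

namespace TV

/-- Rank of a truth value in the truth order `f ≤_t u ≤_t t`. -/
def rank : TV → ℕ
  | f => 0
  | u => 1
  | t => 2

/-- Minimum in the truth order. -/
def tmin (a b : TV) : TV := if rank a ≤ rank b then a else b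

/-- Maximum in the truth order. -/
def tmax (a b : TV) : TV := if rank a ≤ rank b then b else a

/-- Kleene negation. -/
def tneg : TV → TV
  | f => t
  | u => u
  | t => f

/-- The precision order on truth values: `u ≤_p f` and `u ≤_p t` (and reflexivity). -/
def lep (a b : TV) : Prop := a = u ∨ a = b

end TV

/-- Pointwise precision order on three-valued interpretations. -/
def leP {A : Type} (ν ν' : A → TV) : Prop := ∀ a, TV.lep (ν a) (ν' a)

/-- Propositional formulas over a type `A` of atoms. -/
inductive Form (A : Type) where
  | atom : A → Form A
  | conj : Form A → Form A → Form A
  | disj : Form A → Form A → Form A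
  | neg  : Form A → Form A

namespace Form

variable {A : Type}

/-- Two-valued satisfaction of a formula in an interpretation (a set of atoms). -/
def sat (I : Set A) : Form A → Prop
  | .atom a => a ∈ I
  | .conj φ ψ => sat I φ ∧ sat I ψ
  | .disj φ ψ => sat I φ ∨ sat I ψ
  | .neg φ => ¬ sat I φ

/-- Kleene three-valued valuation of a formula. -/
def val (ν : A → TV) : Form A → TV
  | .atom a => ν a
  | .conj φ ψ => TV.tmin (val ν φ) (val ν ψ)
  | .disj φ ψ => TV.tmax (val ν φ) (val ν ψ)
  | .neg φ => TV.tneg (val ν φ)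

/-- A formula is positive if it contains no negation. -/
def Positive : Form A → Prop
  | .atom _ => True
  | .conj φ ψ => Positive φ ∧ Positive ψ
  | .disj φ ψ => Positive φ ∧ Positive ψ
  | .neg _ => False

/-- The set of atoms occurring in a formula. -/
def atoms : Form A → Set A
  | .atom a => {a}
  | .conj φ ψ => atoms φ ∪ atoms ψ
  | .disj φ ψ => atoms φ ∪ atoms ψ
  | .neg φ => atoms φ

/-- Atoms occurring under a number of negations of parity `b` (`true` = odd). -/
def atomsPar : Bool → Form A → Set A
  | b, .atom a => if b then ∅ else {a}
  | b, .conj φ ψ => atomsPar b φ ∪ atomsPar b ψ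
  | b, .disj φ ψ => atomsPar b φ ∪ atomsPar b ψ
  | b, .neg φ => atomsPar (!b) φ

/-- Atoms occurring within the scope of an odd number of negations. -/
def natoms (φ : Form A) : Set A := atomsPar true φ

end Form

/-- A CP-law: a nonempty head list of distinct atoms with probabilities in `(0,1]`
summing to at most `1`, together with a body formula. -/
structure CPLaw (A : Type) where
  head : List (A × ℝ)
  body : Form A
  head_ne : head ≠ []
  head_nodup : (head.map Prod.fst).Nodup
  head_pos : ∀ p ∈ head, 0 < p.2 ∧ p.2 ≤ 1
  head_sum : (head.map Prod.snd).sum ≤ 1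

namespace CPLaw

variable {A : Type}

/-- `head_At(r)`: the set of atoms occurring in the head of `r`. -/
def headAt (r : CPLaw A) : Set A := {a | a ∈ r.head.map Prod.fst}

/-- The sum `Σᵢ αᵢ` of the probabilities in the head of `r`. -/
def psum (r : CPLaw A) : ℝ := (r.head.map Prod.snd).sum

end CPLaw

/-- A probabilistic process: a finite rooted tree (given by a parent function with a
depth function ensuring well-foundedness), with an interpretation, an edge probability
and a path probability attached to each node, together with (for use in execution
models) a CP-law index `rule` attached to each node and, for each non-root node, the
`choice` in the head of the rule fired at its parent that it corresponds to
(`none` is the extra child carrying the leftover probability `1 - Σᵢ αᵢ`). -/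
structure Proc (A R : Type) where
  Node : Type
  [fintypeNode : Fintype Node]
  root : Node
  parent : Node → Node
  depth : Node → ℕ
  interp : Node → Set A
  prob : Node → ℝ
  pathProb : Node → ℝ
  rule : Node → R
  choice : Node → Option ℕ
  depth_root : depth root = 0
  depth_parent : ∀ s, s ≠ root → depth s = depth (parent s) + 1
  pathProb_root : pathProb root = 1
  pathProb_parent : ∀ s, s ≠ root → pathProb s = pathProb (parent s) * prob s

attribute [instance] Proc.fintypeNode

namespace Proc

variable {A R : Type} (W : Proc A R)

/-- `s'` is a child of `s`. -/
def isChild (s' s : W.Node) : Prop := s' ≠ W.root ∧ W.parent s' = s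

/-- `s` is a leaf. -/
def isLeaf (s : W.Node) : Prop := ∀ s', ¬ W.isChild s' s

/-- `strictAnc a b`: `a` is a strict ancestor of `b`. -/
def strictAnc (a b : W.Node) : Prop :=
  Relation.TransGen (fun y x => W.isChild y x) b a

end Proc

variable {A R : Type}

/-- `R_E(s)`: the CP-laws that have not fired at any strict ancestor of `s`. -/
def RE (W : Proc A R) (s : W.Node) : Set R :=
  {r | ∀ s', W.strictAnc s' s → W.rule s' ≠ r}

/-- The CP-law `E(s)` fires at the non-leaf node `s`: `s` has exactly one child for
each head element `(Aᵢ, αᵢ)` (with interpretation `I(s) ∪ {Aᵢ}` and edge probability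
`αᵢ`), plus exactly one extra child with unchanged interpretation and edge probability
`1 - Σᵢ αᵢ` in case `Σᵢ αᵢ < 1`. -/
def FiresAt (C : R → CPLaw A) (W : Proc A R) (s : W.Node) : Prop :=
  (∀ s', W.isChild s' s →
     (∀ i, W.choice s' = some i →
        ∃ h : i < (C (W.rule s)).head.length,
          W.interp s' = insert ((C (W.rule s)).head.get ⟨i, h⟩).1 (W.interp s) ∧
          W.prob s' = ((C (W.rule s)).head.get ⟨i, h⟩).2) ∧
     (W.choice s' = none →
        (C (W.rule s)).psum < 1 ∧ W.interp s' = W.interp s ∧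
          W.prob s' = 1 - (C (W.rule s)).psum)) ∧
  (∀ s₁ s₂, W.isChild s₁ s → W.isChild s₂ s → W.choice s₁ = W.choice s₂ → s₁ = s₂) ∧
  (∀ i, i < (C (W.rule s)).head.length → ∃ s', W.isChild s' s ∧ W.choice s' = some i) ∧
  ((C (W.rule s)).psum < 1 → ∃ s', W.isChild s' s ∧ W.choice s' = none)

/-- `⟨W, I, E⟩` is a weak execution model of the CP-theory `C`. -/
def IsWEM (C : R → CPLaw A) (W : Proc A R) : Prop :=
  W.interp W.root = (∅ : Set A) ∧
  (∀ s, s ≠ W.root → 0 ≤ W.prob s ∧ W.prob s ≤ 1) ∧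
  (∀ s, ¬ W.isLeaf s →
    (∑ s' ∈ Finset.univ.filter (fun s' => W.isChild s' s), W.prob s') = 1) ∧
  (∀ s, ¬ W.isLeaf s →
    W.rule s ∈ RE W s ∧ Form.sat (W.interp s) (C (W.rule s)).body ∧ FiresAt C W s) ∧
  (∀ l, W.isLeaf l → ∀ r ∈ RE W l, ¬ Form.sat (W.interp l) (C r).body)

/-- `ν 0, …, ν n` is a hypothetical derivation sequence at node `s`. -/
def IsHDS (C : R → CPLaw A) (W : Proc A R) (s : W.Node)
    (ν : ℕ → A → TV) (n : ℕ) : Prop :=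
  (∀ a, ν 0 a = if a ∈ W.interp s then TV.t else TV.f) ∧
  ∀ i, i < n → ∃ r ∈ RE W s,
    Form.val (ν i) (C r).body ≠ TV.f ∧
    (∀ p ∈ (C r).headAt, ν i p = TV.f → ν (i+1) p = TV.u) ∧
    (∀ p, ¬ (p ∈ (C r).headAt ∧ ν i p = TV.f) → ν (i+1) p = ν i p)

/-- The hypothetical derivation sequence `ν 0, …, ν n` at `s` is terminal. -/
def HDSTerminal (C : R → CPLaw A) (W : Proc A R) (s : W.Node)
    (ν : ℕ → A → TV) (n : ℕ) : Prop :=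
  ¬ ∃ r ∈ RE W s, Form.val (ν n) (C r).body ≠ TV.f ∧
      ∃ p ∈ (C r).headAt, ν n p = TV.f

/-- `⟨W, I, E⟩` is an execution model of `C`: a weak execution model in which, at every
non-leaf node, the body of the fired CP-law is not unknown in the potential of the
node (the common limit of all terminal hypothetical derivation sequences). -/
def IsExec (C : R → CPLaw A) (W : Proc A R) : Prop :=
  IsWEM C W ∧
  ∀ s, ¬ W.isLeaf s → ∀ ν n, IsHDS C W s ν n → HDSTerminal C W s ν n →
    Form.val (ν n) (C (W.rule s)).body ≠ TV.u

/-- `π_T`: the probability distribution on interpretations induced by a process. -/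
def piT (W : Proc A R) (J : Set A) : ℝ :=
  ∑ l ∈ Finset.univ.filter (fun l => W.isLeaf l ∧ W.interp l = J), W.pathProb l

/-- The set `O_s`: three-valued interpretations whose true atoms are exactly `I(s)`
and in which no rule of `R_E(s)` with non-false body has a false head atom. -/
def Oset (C : R → CPLaw A) (W : Proc A R) (s : W.Node) : Set (A → TV) :=
  {ν | (∀ p, ν p = TV.t ↔ p ∈ W.interp s) ∧
    ∀ r ∈ RE W s, Form.val ν (C r).body ≠ TV.f →
      ∀ p ∈ (C r).headAt, ν p ≠ TV.f}

instance : Fintype TV := ⟨{TV.f, TV.u, TV.t}, by intro x; cases x <;> simp⟩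

theorem TV.lep_tmin : ∀ a b a' b' : TV, TV.lep a b → TV.lep a' b' →
    TV.lep (TV.tmin a a') (TV.tmin b b') := by
  intro a b a' b' h h'
  cases a <;> cases b <;> cases a' <;> cases b' <;>
    simp_all [TV.lep, TV.tmin, TV.rank]

theorem TV.lep_tmax : ∀ a b a' b' : TV, TV.lep a b → TV.lep a' b' →
    TV.lep (TV.tmax a a') (TV.tmax b b') := by
  intro a b a' b' h h'
  cases a <;> cases b <;> cases a' <;> cases b' <;>
    simp_all [TV.lep, TV.tmax, TV.rank]

theorem TV.lep_tneg : ∀ a b : TV, TV.lep a b → TV.lep (TV.tneg a) (TV.tneg b) := by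
  intro a b h
  cases a <;> cases b <;> simp_all [TV.lep, TV.tneg]

theorem TV.lep_ne_f : ∀ a b : TV, TV.lep a b → b ≠ TV.f → a ≠ TV.f := by
  intro a b h hb
  cases a <;> cases b <;> simp_all [TV.lep]

theorem val_lep {A : Type} {ν ν' : A → TV} (h : leP ν ν') :
    ∀ φ : Form A, TV.lep (Form.val ν φ) (Form.val ν' φ) := by
  intro φ
  induction φ with
  | atom a => exact h a
  | conj φ ψ ih1 ih2 => exact TV.lep_tmin _ _ _ _ ih1 ih2
  | disj φ ψ ih1 ih2 => exact TV.lep_tmax _ _ _ _ ih1 ih2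
  | neg φ ih => exact TV.lep_tneg _ _ ih

/-- The three-valued interpretation that is true on `Is`, unknown on `U \ Is`, false elsewhere. -/
def nuOf {A : Type} (Is U : Set A) : A → TV :=
  fun a => if a ∈ Is then TV.t else if a ∈ U then TV.u else TV.f

theorem nuOf_leP {A : Type} {Is U U' : Set A} (h : U ⊆ U') :
    leP (nuOf Is U') (nuOf Is U) := by
  intro a
  unfold nuOf
  by_cases h1 : a ∈ Is
  · simp [h1, TV.lep]
  · by_cases h2 : a ∈ U'
    · simp [h1, h2, TV.lep]
    · have h3 : a ∉ U := fun hx => h2 (h hx)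
      simp [h1, h2, h3, TV.lep]

theorem eq_nuOf {A : Type} {Is : Set A} {ν : A → TV} (h : ∀ a, ν a = TV.t ↔ a ∈ Is) :
    ν = nuOf Is {a | ν a = TV.u} := by
  funext a
  unfold nuOf
  by_cases h1 : a ∈ Is
  · simp [h1, (h a).2 h1]
  · have ht : ν a ≠ TV.t := fun hx => h1 ((h a).1 hx)
    by_cases h2 : ν a = TV.u
    · simp [h1, h2]
    · have : ν a = TV.f := by cases hv : ν a <;> simp_all
      simp [h1, h2, this]

/-- The monotone operator whose least fixpoint is the set of "unknown" atoms of the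
potential at node `s`. -/
def Fop {A R : Type} (C : R → CPLaw A) (W : Proc A R) (s : W.Node) : Set A →o Set A :=
  ⟨fun U => {a | a ∉ W.interp s ∧ ∃ r ∈ RE W s,
      Form.val (nuOf (W.interp s) U) (C r).body ≠ TV.f ∧ a ∈ (C r).headAt},
   by
    intro U U' hUU' a ⟨ha, r, hr, hb, hh⟩
    exact ⟨ha, r, hr, TV.lep_ne_f _ _ (val_lep (nuOf_leP hUU') _) hb, hh⟩⟩

/-- Characterization of the potential via `O_s`: `O_s` has a `≤_p`-greatest element,
and the limit of every terminal hypothetical derivation sequence at `s` equals it. -/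
theorem potential_is_greatest_of_Oset {A R : Type} [Fintype A] [Fintype R]
    (C : R → CPLaw A) (W : Proc A R) (hW : IsWEM C W) (s : W.Node) :
    ∃ νstar ∈ Oset C W s, (∀ ν ∈ Oset C W s, leP ν νstar) ∧
      ∀ (ν : ℕ → A → TV) (n : ℕ), IsHDS C W s ν n → HDSTerminal C W s ν n →
        ν n = νstar := by
  classical
  set Is := W.interp s with hIsdef
  set U := (Fop C W s).lfp with hUdef
  have hfix : Fop C W s U = U := (Fop C W s).map_lfp
  have mem_Fop : ∀ (X : Set A) (a : A), a ∈ Fop C W s X ↔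
      (a ∉ Is ∧ ∃ r ∈ RE W s, Form.val (nuOf Is X) (C r).body ≠ TV.f ∧
        a ∈ (C r).headAt) := fun _ _ => Iff.rfl
  have hnuT : ∀ (X : Set A) (p : A), nuOf Is X p = TV.t ↔ p ∈ Is := by
    intro X p
    unfold nuOf
    by_cases h1 : p ∈ Is
    · simp [h1]
    · by_cases h2 : p ∈ X <;> simp [h1, h2]
  refine ⟨nuOf Is U, ⟨hnuT U, ?_⟩, ?_, ?_⟩
  · -- closure property
    intro r hr hb p hp
    by_cases hpI : p ∈ Is
    · simp [nuOf, hpI]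
    · have hpU : p ∈ U := by
        rw [← hfix]
        exact (mem_Fop U p).2 ⟨hpI, r, hr, hb, hp⟩
      simp [nuOf, hpI, hpU]
  · -- greatest element
    rintro ν ⟨hνt, hνcl⟩
    have hν : ν = nuOf Is {a | ν a = TV.u} := eq_nuOf hνt
    have hpre : Fop C W s {a | ν a = TV.u} ≤ {a | ν a = TV.u} := by
      rintro a ⟨haI, r, hr, hb, hh⟩
      rw [← hν] at hb
      have hnf : ν a ≠ TV.f := hνcl r hr hb a hh
      have hnt : ν a ≠ TV.t := fun hx => haI ((hνt a).1 hx)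
      show ν a = TV.u
      cases hv : ν a with
      | f => exact absurd hv hnf
      | u => rfl
      | t => exact absurd hv hnt
    have hsub : U ⊆ {a | ν a = TV.u} := (Fop C W s).lfp_le hpre
    intro a
    by_cases haI : a ∈ Is
    · right
      rw [(hνt a).2 haI]
      simp [nuOf, haI]
    · cases hv : ν a with
      | t => exact absurd ((hνt a).1 hv) haI
      | u => exact Or.inl rfl
      | f =>
        right
        have haU : a ∉ U := fun hx => by
          have hu : ν a = TV.u := hsub hx
          rw [hv] at hu
          exact absurd hu (by simp)
        simp [nuOf, haI, haU, hv]
  · -- terminal HDS limit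
    rintro ν n ⟨h0, hstep⟩ hterm
    have key : ∀ i, i ≤ n → (∀ a, ν i a = TV.t ↔ a ∈ Is) ∧
        (∀ a, ν i a = TV.u → a ∈ U) := by
      intro i
      induction i with
      | zero =>
        intro _
        constructor
        · intro a
          rw [h0 a]
          by_cases h1 : a ∈ Is <;> simp [h1, hIsdef]
        · intro a ha
          rw [h0 a] at ha
          by_cases h1 : a ∈ W.interp s <;> simp [h1] at ha
      | succ i ih =>
        intro hin
        have hiin : i < n := Nat.lt_of_succ_le hin
        obtain ⟨ihT, ihU⟩ := ih (Nat.le_of_lt hiin)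
        obtain ⟨r, hr, hb, hupd1, hupd2⟩ := hstep i hiin
        have hEq : ν i = nuOf Is {a | ν i a = TV.u} := eq_nuOf ihT
        have hUi : {a | ν i a = TV.u} ⊆ U := ihU
        rw [hEq] at hb
        have hb' : Form.val (nuOf Is U) (C r).body ≠ TV.f :=
          TV.lep_ne_f _ _ (val_lep (nuOf_leP hUi) _) hb
        constructor
        · intro a
          constructor
          · intro h
            by_cases hc : a ∈ (C r).headAt ∧ ν i a = TV.f
            · rw [hupd1 a hc.1 hc.2] at h
              exact absurd h (by simp)
            · rw [hupd2 a hc] at h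
              exact (ihT a).1 h
          · intro haI
            have hit : ν i a = TV.t := (ihT a).2 haI
            have hc : ¬ (a ∈ (C r).headAt ∧ ν i a = TV.f) := by simp [hit]
            rw [hupd2 a hc]
            exact hit
        · intro a hau
          by_cases hc : a ∈ (C r).headAt ∧ ν i a = TV.f
          · have haI : a ∉ Is := fun h => by
              have ht := (ihT a).2 h
              rw [hc.2] at ht
              exact absurd ht (by simp)
            rw [← hfix]
            exact (mem_Fop U a).2 ⟨haI, r, hr, hb', hc.1⟩
          · rw [hupd2 a hc] at hau
            exact ihU a hau
    obtain ⟨hn1, hn2⟩ := key n le_rfl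
    have hEq : ν n = nuOf Is {a | ν n a = TV.u} := eq_nuOf hn1
    have hpre : Fop C W s {a | ν n a = TV.u} ≤ {a | ν n a = TV.u} := by
      rintro a ⟨haI, r, hr, hb, hh⟩
      rw [← hEq] at hb
      by_contra hne
      have hnt : ν n a ≠ TV.t := fun hx => haI ((hn1 a).1 hx)
      have hf : ν n a = TV.f := by
        cases hv : ν n a with
        | f => rfl
        | u => exact absurd hv hne
        | t => exact absurd hv hnt
      exact hterm ⟨r, hr, hb, a, hh, hf⟩
    have hsub : U ⊆ {a | ν n a = TV.u} := (Fop C W s).lfp_le hpre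
    have hset : {a | ν n a = TV.u} = U := le_antisymm hn2 hsub
    rw [hEq, hset]

end CP
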